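/- Let n ≥ 2 be an integer, ℓ ≥ 1 a natural number with (ℓ,n) ≠ (1,2) (equivalently 2ℓ+n ≠ 4), and let a ∈ (0,1). Then the matrix M : Matrix (Fin 4) (Fin 4) ℝ with rows (ℓ, 2−ℓ−n, ℓ+2, 4−ℓ−n), (ℓ·a^{ℓ−1}, (2−ℓ−n)·a^{−(ℓ+n−1)}, (ℓ+2)·a^{ℓ+1}, (4−ℓ−n)·a^{−(ℓ+n−3)}), (0, 0, ℓ(2ℓ+n), (2ℓ+n−4)(ℓ+n−2)), (0, 0, ℓ(2ℓ+n)·a^{ℓ−1}, (2ℓ+n−4)(ℓ+n−2)·a^{−(ℓ+n−1)}) has nonzero determinant; in particular the homogeneous linear system Mx = 0 has only the trivial solution. -/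

import Mathlib

open Real

/-- The matrix obtained by imposing `∂_ν u = 0` and `∂_ν(Δu) = 0` on both boundary
components of the annulus `{a < |x| < 1} ⊆ ℝⁿ` for the biharmonic mode
`u(r) = A r^ℓ + B r^{2-ℓ-n} + C r^{ℓ+2} + D r^{4-ℓ-n}`. -/
noncomputable def annulusZeroMatrix (n ℓ : ℕ) (a : ℝ) : Matrix (Fin 4) (Fin 4) ℝ :=
  !![(ℓ : ℝ), 2 - ℓ - n, (ℓ : ℝ) + 2, 4 - ℓ - n;
     (ℓ : ℝ) * a ^ ((ℓ : ℝ) - 1), (2 - (ℓ : ℝ) - n) * a ^ (-((ℓ : ℝ) + n - 1)),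
       ((ℓ : ℝ) + 2) * a ^ ((ℓ : ℝ) + 1), (4 - (ℓ : ℝ) - n) * a ^ (-((ℓ : ℝ) + n - 3));
     0, 0, (ℓ : ℝ) * (2 * ℓ + n), (2 * (ℓ : ℝ) + n - 4) * ((ℓ : ℝ) + n - 2);
     0, 0, (ℓ : ℝ) * (2 * ℓ + n) * a ^ ((ℓ : ℝ) - 1),
       (2 * (ℓ : ℝ) + n - 4) * ((ℓ : ℝ) + n - 2) * a ^ (-((ℓ : ℝ) + n - 1))]

theorem Matrix.det_fin_four_of_lowerLeft_eq_zero {R : Type*} [CommRing R]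
    (A : Matrix (Fin 4) (Fin 4) R) (h20 : A 2 0 = 0) (h21 : A 2 1 = 0) (h30 : A 3 0 = 0)
    (h31 : A 3 1 = 0) :
    A.det = (A 0 0 * A 1 1 - A 0 1 * A 1 0) * (A 2 2 * A 3 3 - A 2 3 * A 3 2) := by
  rw [Matrix.det_succ_column_zero, Fin.sum_univ_four]
  simp only [Matrix.det_fin_three, Matrix.submatrix_apply, Fin.zero_succAbove,
    Fin.succ_zero_eq_one, Fin.succ_one_eq_two, Fin.one_succAbove_zero, Fin.one_succAbove_one,
    show (Fin.succ 2 : Fin 4) = 3 from rfl, show Fin.succAbove (1 : Fin 4) 2 = 3 from rfl,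
    Fin.val_zero, Fin.val_one, h20, h21, h30, h31]
  ring

/- Both diagonal blocks have the shape `!![p, q; p * Y, q * X]` with `Y = a ^ (ℓ - 1)` and
`X = a ^ (-(ℓ + n - 1))`, so each contributes a factor `X - Y`. -/
theorem annulusZeroMatrix_det (n ℓ : ℕ) (a : ℝ) :
    (annulusZeroMatrix n ℓ a).det =
      (ℓ : ℝ) ^ 2 * (2 - ℓ - n) * (2 * ℓ + n) * (2 * ℓ + n - 4) * (ℓ + n - 2) *
        (a ^ (-((ℓ : ℝ) + n - 1)) - a ^ ((ℓ : ℝ) - 1)) ^ 2 := by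
  rw [Matrix.det_fin_four_of_lowerLeft_eq_zero _ rfl rfl rfl rfl]
  simp only [annulusZeroMatrix, Matrix.of_apply, Matrix.cons_val', Matrix.cons_val_zero,
    Matrix.cons_val_fin_one, Matrix.cons_val_one, Matrix.cons_val]
  ring

theorem annulusZeroMatrix_det_ne_zero (n : ℕ) (hn : 2 ≤ n) (ℓ : ℕ) (hℓ : 1 ≤ ℓ)
    (hℓn : 2 * ℓ + n ≠ 4) (a : ℝ) (ha : a ∈ Set.Ioo (0 : ℝ) 1) :
    (annulusZeroMatrix n ℓ a).det ≠ 0 ∧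
      ∀ x : Fin 4 → ℝ, (annulusZeroMatrix n ℓ a).mulVec x = 0 → x = 0 := by
  obtain ⟨ha₀, ha₁⟩ := ha
  have hℓ' : (1 : ℝ) ≤ ℓ := by exact_mod_cast hℓ
  have hn' : (2 : ℝ) ≤ n := by exact_mod_cast hn
  have hℓn' : 2 * (ℓ : ℝ) + n - 4 ≠ 0 := sub_ne_zero.mpr (by exact_mod_cast hℓn)
  have hXY : a ^ (-((ℓ : ℝ) + n - 1)) - a ^ ((ℓ : ℝ) - 1) ≠ 0 := by
    rw [sub_ne_zero, Ne, rpow_right_inj ha₀ ha₁.ne]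
    linarith
  have hdet : (annulusZeroMatrix n ℓ a).det ≠ 0 := by
    rw [annulusZeroMatrix_det]
    refine mul_ne_zero (mul_ne_zero (mul_ne_zero (mul_ne_zero (mul_ne_zero ?_ ?_) ?_) hℓn') ?_)
      (pow_ne_zero 2 hXY)
    all_goals first | positivity | linarith
  exact ⟨hdet, fun x hx => Matrix.eq_zero_of_mulVec_eq_zero hdet hx⟩
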